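/- arXiv:1710.10491 — 3 statements merged into one kernel-verified Lean document; each statement's English description precedes it below -/
import Mathlib

section
/- For n > 1, every monic-at-zero divisor d(x) of x^n - 1 in ℤ[x] with d(0) = 1 is, modulo x^(r+1), equal to a product over d ≤ r of (1 - x^d)^(e_d) where each exponent e_d is an integer with |e_d| ≤ 2^(ν(n)-1). -/
open PowerSeries

/-- Integer power of a power series over `ℚ`, with negative exponents interpreted via the
power series inverse (which exists when the constant term is nonzero). -/
noncomputable def zp (f : PowerSeries ℚ) (k : ℤ) : PowerSeries ℚ :=
  if 0 ≤ k then f ^ k.toNat else (f ^ (-k).toNat)⁻¹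

namespace DCP

open Polynomial ArithmeticFunction Finset
open scoped ArithmeticFunction.Moebius ArithmeticFunction.zeta


lemma card_squarefree_divisors (k : ℕ) (h0 : k ≠ 0) :
    (k.divisors.filter Squarefree).card = 2 ^ k.primeFactors.card := by
  have h := Nat.divisors_filter_squarefree h0
  have : (k.divisors.filter Squarefree).card =
      ((UniqueFactorizationMonoid.normalizedFactors k).toFinset.powerset.val.map
        fun x => x.val.prod).card := by
    rw [Finset.card, h]
  rw [this, Multiset.card_map, ← Finset.card, Finset.card_powerset]
  congr 1
  rw [Nat.factors_eq]
  simp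

lemma card_moebius_one (k : ℕ) (hk : 1 < k) :
    (k.divisors.filter fun t => (μ t : ℤ) = 1).card = 2 ^ (k.primeFactors.card - 1) ∧
    (k.divisors.filter fun t => (μ t : ℤ) = -1).card = 2 ^ (k.primeFactors.card - 1) := by
  classical
  set P := (k.divisors.filter fun t => (μ t : ℤ) = 1).card with hP
  set N := (k.divisors.filter fun t => (μ t : ℤ) = -1).card with hN
  have h0 : k ≠ 0 := by omega
  have hsum : ∑ i ∈ k.divisors, (μ i : ℤ) = 0 := by
    have h : (μ * ζ : ArithmeticFunction ℤ) k = (1 : ArithmeticFunction ℤ) k := by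
      rw [moebius_mul_coe_zeta]
    rw [coe_mul_zeta_apply, one_apply_ne (by omega : k ≠ 1)] at h
    exact h
  -- P = N
  have hPN : (P : ℤ) = N := by
    have hsplit : ∑ i ∈ k.divisors, (μ i : ℤ) =
        ∑ i ∈ k.divisors.filter (fun t => (μ t : ℤ) = 1), (μ i : ℤ)
        + ∑ i ∈ k.divisors.filter (fun t => ¬ (μ t : ℤ) = 1), (μ i : ℤ) :=
      (Finset.sum_filter_add_sum_filter_not _ _ _).symm
    have hsplit2 : ∑ i ∈ k.divisors.filter (fun t => ¬ (μ t : ℤ) = 1), (μ i : ℤ) =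
        ∑ i ∈ (k.divisors.filter (fun t => ¬ (μ t : ℤ) = 1)).filter (fun t => (μ t : ℤ) = -1), (μ i : ℤ)
        + ∑ i ∈ (k.divisors.filter (fun t => ¬ (μ t : ℤ) = 1)).filter (fun t => ¬ (μ t : ℤ) = -1), (μ i : ℤ) :=
      (Finset.sum_filter_add_sum_filter_not _ _ _).symm
    have e1 : ∑ i ∈ k.divisors.filter (fun t => (μ t : ℤ) = 1), (μ i : ℤ) = P := by
      rw [hP]; rw [Finset.sum_congr rfl (fun x hx => (Finset.mem_filter.1 hx).2)]
      simp
    have e2 : ∑ i ∈ (k.divisors.filter (fun t => ¬ (μ t : ℤ) = 1)).filter (fun t => (μ t : ℤ) = -1), (μ i : ℤ) = -(N:ℤ) := by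
      have : (k.divisors.filter (fun t => ¬ (μ t : ℤ) = 1)).filter (fun t => (μ t : ℤ) = -1)
          = k.divisors.filter (fun t => (μ t : ℤ) = -1) := by
        rw [Finset.filter_filter]
        apply Finset.filter_congr
        intro x hx
        constructor
        · rintro ⟨_, h2⟩; exact h2
        · intro h2; exact ⟨by rw [h2]; norm_num, h2⟩
      rw [this, Finset.sum_congr rfl (fun x hx => (Finset.mem_filter.1 hx).2)]
      simp [hN]
    have e3 : ∑ i ∈ (k.divisors.filter (fun t => ¬ (μ t : ℤ) = 1)).filter (fun t => ¬ (μ t : ℤ) = -1), (μ i : ℤ) = 0 := by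
      apply Finset.sum_eq_zero
      intro x hx
      simp only [Finset.mem_filter] at hx
      have := @abs_moebius_le_one x
      rw [abs_le] at this
      omega
    rw [hsplit, hsplit2, e1, e2, e3] at hsum
    omega
  -- P + N = 2 ^ ν
  have hPN2 : P + N = 2 ^ k.primeFactors.card := by
    have hdisj : Disjoint (k.divisors.filter fun t => (μ t : ℤ) = 1)
        (k.divisors.filter fun t => (μ t : ℤ) = -1) := by
      apply Finset.disjoint_filter_filter'
      rw [disjoint_iff_inf_le]
      intro x hx
      simp only [Pi.inf_apply] at hx
      exact absurd (hx.1.symm.trans hx.2) (by norm_num)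
    have hunion : (k.divisors.filter fun t => (μ t : ℤ) = 1) ∪ (k.divisors.filter fun t => (μ t : ℤ) = -1)
        = k.divisors.filter Squarefree := by
      rw [← Finset.filter_or]
      apply Finset.filter_congr
      intro x hx
      constructor
      · intro h
        rw [← moebius_ne_zero_iff_squarefree]
        rcases h with h | h <;> omega
      · intro h
        have := abs_moebius_eq_one_of_squarefree h
        rw [abs_eq (by norm_num : (0:ℤ) ≤ 1)] at this
        omega
    have := Finset.card_union_of_disjoint hdisj
    rw [hunion, card_squarefree_divisors k h0] at this
    omega
  have hν : 1 ≤ k.primeFactors.card := by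
    have := Nat.nonempty_primeFactors.2 hk
    exact Finset.Nonempty.card_pos this
  have h2 : 2 ^ k.primeFactors.card = 2 * 2 ^ (k.primeFactors.card - 1) := by
    rw [← pow_succ']
    congr 1
    omega
  constructor <;> omega

lemma abs_sum_moebius_le {k : ℕ} (hk : 1 < k) (T : Finset ℕ) (hT : T ⊆ k.divisors) :
    |∑ t ∈ T, (μ t : ℤ)| ≤ 2 ^ (k.primeFactors.card - 1) := by
  classical
  obtain ⟨hP, hN⟩ := card_moebius_one k hk
  rw [abs_le]
  constructor
  · have h1 : -(∑ t ∈ T, (μ t : ℤ)) ≤ ∑ t ∈ T, (if (μ t : ℤ) = -1 then (1:ℤ) else 0) := by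
      rw [← Finset.sum_neg_distrib]
      apply Finset.sum_le_sum
      intro t _
      have := @abs_moebius_le_one t
      rw [abs_le] at this
      split <;> omega
    rw [Finset.sum_boole] at h1
    have h2 : ((T.filter fun t => (μ t : ℤ) = -1).card : ℤ) ≤
        ((k.divisors.filter fun t => (μ t : ℤ) = -1).card : ℤ) := by
      exact_mod_cast Finset.card_le_card (Finset.filter_subset_filter _ hT)
    rw [hN] at h2
    push_cast at h2 ⊢
    omega
  · have h1 : (∑ t ∈ T, (μ t : ℤ)) ≤ ∑ t ∈ T, (if (μ t : ℤ) = 1 then (1:ℤ) else 0) := by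
      apply Finset.sum_le_sum
      intro t _
      have := @abs_moebius_le_one t
      rw [abs_le] at this
      split <;> omega
    rw [Finset.sum_boole] at h1
    have h2 : ((T.filter fun t => (μ t : ℤ) = 1).card : ℤ) ≤
        ((k.divisors.filter fun t => (μ t : ℤ) = 1).card : ℤ) := by
      exact_mod_cast Finset.card_le_card (Finset.filter_subset_filter _ hT)
    rw [hP] at h2
    push_cast at h2 ⊢
    omega

lemma e_bound {n : ℕ} (hn : 1 < n) (S : Finset ℕ) (hS : S ⊆ n.divisors) (j : ℕ) :
    |∑ m ∈ S, if j ∣ m then (μ (m / j) : ℤ) else 0| ≤ 2 ^ (n.primeFactors.card - 1) := by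
  classical
  have hbound1 : (1:ℤ) ≤ 2 ^ (n.primeFactors.card - 1) := one_le_pow₀ (by norm_num)
  rw [Finset.sum_ite, Finset.sum_const_zero, add_zero]
  by_cases hj : j = 0 ∨ ¬ j ∣ n
  · have : S.filter (j ∣ ·) = ∅ := by
      apply Finset.filter_false_of_mem
      intro m hm
      have hm' := hS hm
      rw [Nat.mem_divisors] at hm'
      rcases hj with h0 | hnd
      · subst h0; intro h
        have hm0 := Nat.eq_zero_of_zero_dvd h
        rw [hm0] at hm'
        exact hm'.2 (Nat.eq_zero_of_zero_dvd hm'.1)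
      · intro h; exact hnd (h.trans hm'.1)
    rw [this]
    simp only [Finset.sum_empty, abs_zero]
    exact le_trans zero_le_one hbound1
  · push_neg at hj
    obtain ⟨hj0, hjn⟩ := hj
    have hn0 : n ≠ 0 := by omega
    have hinj : Set.InjOn (· / j) ↑(S.filter (j ∣ ·)) := by
      intro m1 h1 m2 h2 h
      simp only [Finset.coe_filter, Set.mem_setOf_eq] at h1 h2
      have e1 : m1 / j * j = m1 := Nat.div_mul_cancel h1.2
      have e2 : m2 / j * j = m2 := Nat.div_mul_cancel h2.2
      rw [← e1, ← e2]
      simp only at h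
      rw [h]
    rw [← Finset.sum_image hinj]
    set T := (S.filter (j ∣ ·)).image (· / j) with hT
    have hTsub : T ⊆ (n / j).divisors := by
      intro t ht
      rw [hT, Finset.mem_image] at ht
      obtain ⟨m, hm, rfl⟩ := ht
      rw [Finset.mem_filter] at hm
      have hm' := hS hm.1
      rw [Nat.mem_divisors] at hm'
      rw [Nat.mem_divisors]
      refine ⟨?_, ?_⟩
      · obtain ⟨s, hs⟩ := hm'.1
        obtain ⟨t', ht'⟩ := hm.2
        rw [ht', Nat.mul_div_cancel_left _ (Nat.pos_of_ne_zero hj0)]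
        exact ⟨s, by rw [hs, ht', mul_assoc, Nat.mul_div_cancel_left _ (Nat.pos_of_ne_zero hj0)]⟩
      · exact Nat.ne_of_gt (Nat.div_pos (Nat.le_of_dvd (Nat.pos_of_ne_zero hn0) hjn)
          (Nat.pos_of_ne_zero hj0))
    by_cases hnj : n / j = 1
    · rw [hnj] at hTsub
      rw [Nat.divisors_one] at hTsub
      rcases Finset.subset_singleton_iff.1 hTsub with h | h <;> rw [h] <;> simp [hbound1]
    · have hnj1 : 1 < n / j := by
        have := Nat.div_pos (Nat.le_of_dvd (Nat.pos_of_ne_zero hn0) hjn) (Nat.pos_of_ne_zero hj0)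
        omega
      refine le_trans (abs_sum_moebius_le hnj1 T hTsub) ?_
      have hsub : (n / j).primeFactors ⊆ n.primeFactors :=
        Nat.primeFactors_mono (Nat.div_dvd_of_dvd hjn) hn0
      have hcard := Finset.card_le_card hsub
      exact pow_le_pow_right₀ (by norm_num) (Nat.sub_le_sub_right hcard 1)


abbrev PS := PowerSeries ℚ

noncomputable def del (m : ℕ) : ℚ := if m = 1 then -1 else 1

lemma coeff0_cyclotomic (m : ℕ) : (cyclotomic m ℚ).coeff 0 = del m := by
  unfold del
  rcases Nat.lt_or_ge m 2 with h | h
  · interval_cases m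
    · simp [cyclotomic_zero]
    · simp [cyclotomic_one]
  · rw [cyclotomic_coeff_zero ℚ (by omega), if_neg (by omega)]

lemma coeff0_signed (m : ℕ) : (Polynomial.C (del m) * cyclotomic m ℚ).coeff 0 = 1 := by
  rw [Polynomial.coeff_C_mul, coeff0_cyclotomic]
  unfold del; split <;> norm_num

lemma isUnit_Fps (m : ℕ) :
    IsUnit ((Polynomial.C (del m) * cyclotomic m ℚ : Polynomial ℚ) : PS) := by
  rw [PowerSeries.isUnit_iff_constantCoeff, ← PowerSeries.coeff_zero_eq_constantCoeff_apply,
    Polynomial.coeff_coe, coeff0_signed]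
  exact isUnit_one

noncomputable def FU (m : ℕ) : PSˣ := (isUnit_Fps m).unit

lemma FU_val (m : ℕ) :
    ((FU m : PSˣ) : PS) = ((Polynomial.C (del m) * cyclotomic m ℚ : Polynomial ℚ) : PS) :=
  (isUnit_Fps m).unit_spec

noncomputable def gps (k : ℕ) : PS := if k = 0 then 1 else 1 - (PowerSeries.X : PS) ^ k

lemma isUnit_gps (k : ℕ) : IsUnit (gps k) := by
  rw [PowerSeries.isUnit_iff_constantCoeff]
  unfold gps
  rcases Nat.eq_zero_or_pos k with h | h
  · simp [h]
  · rw [if_neg (by omega)]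
    simp [map_sub, map_pow, PowerSeries.constantCoeff_X, zero_pow (by omega : k ≠ 0)]

noncomputable def GU (k : ℕ) : PSˣ := (isUnit_gps k).unit

lemma GU_val {k : ℕ} (hk : k ≠ 0) : ((GU k : PSˣ) : PS) = 1 - (PowerSeries.X : PS) ^ k := by
  rw [show ((GU k : PSˣ) : PS) = gps k from (isUnit_gps k).unit_spec]
  unfold gps
  rw [if_neg hk]

lemma prod_FU {k : ℕ} (hk : 0 < k) : ∏ m ∈ k.divisors, FU m = GU k := by
  apply Units.ext
  rw [show ((∏ m ∈ k.divisors, FU m : PSˣ) : PS) = ∏ m ∈ k.divisors, ((FU m : PSˣ) : PS) from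
    map_prod (Units.coeHom PS) _ _]
  rw [GU_val hk.ne']
  simp_rw [FU_val]
  rw [show (∏ m ∈ k.divisors, ((Polynomial.C (del m) * cyclotomic m ℚ : Polynomial ℚ) : PS))
      = ((∏ m ∈ k.divisors, (Polynomial.C (del m) * cyclotomic m ℚ) : Polynomial ℚ) : PS) from
    (map_prod (Polynomial.coeToPowerSeries.ringHom) _ _).symm]
  rw [Finset.prod_mul_distrib]
  rw [show (∏ x ∈ k.divisors, Polynomial.C (del x)) = Polynomial.C (∏ x ∈ k.divisors, del x) from
    (map_prod (Polynomial.C : ℚ →+* Polynomial ℚ) _ _).symm]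
  have hdel : ∏ m ∈ k.divisors, del m = -1 := by
    rw [Finset.prod_eq_single_of_mem 1 (Nat.one_mem_divisors.2 hk.ne')]
    · unfold del; simp
    · intro b _ hb; unfold del; rw [if_neg hb]
  rw [hdel, prod_cyclotomic_eq_X_pow_sub_one hk ℚ]
  have : (Polynomial.C (-1 : ℚ)) * (Polynomial.X ^ k - 1) = 1 - Polynomial.X ^ k := by
    rw [map_neg, map_one]; ring
  rw [this]
  push_cast [Polynomial.coe_sub, Polynomial.coe_one, Polynomial.coe_pow, Polynomial.coe_X]
  rfl

lemma FU_eq {m : ℕ} (hm : 0 < m) :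
    FU m = ∏ j ∈ m.divisors, GU j ^ (μ (m / j) : ℤ) := by
  have key := (prod_eq_iff_prod_pow_moebius_eq (R := PSˣ) (f := FU) (g := GU)).1
    (fun k hk => prod_FU hk) m hm
  rw [← key, Nat.prod_divisorsAntidiagonal' (f := fun a b => GU b ^ (μ a : ℤ))]

lemma coe_unit_inv (v : PSˣ) : ((v⁻¹ : PSˣ) : PS) = (v : PS)⁻¹ := by
  have hc : PowerSeries.constantCoeff (v : PS) ≠ 0 := by
    have h := v.isUnit
    rw [PowerSeries.isUnit_iff_constantCoeff] at h
    exact h.ne_zero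
  have h1 : (v : PS) * (v : PS)⁻¹ = 1 := PowerSeries.mul_inv_cancel _ hc
  calc ((v⁻¹ : PSˣ) : PS) = ((v⁻¹ : PSˣ) : PS) * ((v : PS) * (v : PS)⁻¹) := by
        rw [h1, mul_one]
    _ = (((v⁻¹ : PSˣ) : PS) * (v : PS)) * (v : PS)⁻¹ := by ring
    _ = (v : PS)⁻¹ := by rw [Units.inv_mul, one_mul]

lemma zp_unit (v : PSˣ) (k : ℤ) : zp (v : PS) k = ((v ^ k : PSˣ) : PS) := by
  unfold zp
  split
  · next h =>
    rw [show v ^ k = v ^ k.toNat by rw [← zpow_natCast, Int.toNat_of_nonneg h],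
      Units.val_pow_eq_pow_val]
  · next h =>
    push_neg at h
    rw [show v ^ k = (v ^ (-k).toNat)⁻¹ by
      rw [← zpow_natCast, Int.toNat_of_nonneg (by omega : (0:ℤ) ≤ -k), zpow_neg, inv_inv]]
    rw [coe_unit_inv, Units.val_pow_eq_pow_val]

lemma dvd_mul_sub_one {R : Type*} [CommRing R] {p a b : R} (ha : p ∣ a - 1) (hb : p ∣ b - 1) :
    p ∣ a * b - 1 := by
  have h : a * b - 1 = a * (b - 1) + (a - 1) := by ring
  rw [h]
  exact dvd_add (hb.mul_left a) ha

lemma dvd_prod_sub_one {R α : Type*} [CommRing R] {p : R} (s : Finset α) (f : α → R)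
    (h : ∀ a ∈ s, p ∣ f a - 1) : p ∣ (∏ a ∈ s, f a) - 1 :=
  Finset.prod_induction f (fun g => p ∣ g - 1) (fun _ _ => dvd_mul_sub_one) (by simp) h

lemma dvd_unit_inv_sub_one {p : PS} (v : PSˣ) (h : p ∣ (v : PS) - 1) :
    p ∣ ((v⁻¹ : PSˣ) : PS) - 1 := by
  have heq : ((v⁻¹ : PSˣ) : PS) - 1 = -(((v⁻¹ : PSˣ) : PS) * ((v : PS) - 1)) := by
    have hv : ((v⁻¹ : PSˣ) : PS) * (v : PS) = 1 := Units.inv_mul v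
    rw [mul_sub, hv, mul_one]; ring
  rw [heq]
  exact dvd_neg.2 (h.mul_left _)

lemma dvd_zpow_sub_one {p : PS} (v : PSˣ) (h : p ∣ (v : PS) - 1) (k : ℤ) :
    p ∣ ((v ^ k : PSˣ) : PS) - 1 := by
  have hnat : ∀ t : ℕ, p ∣ ((v ^ t : PSˣ) : PS) - 1 := by
    intro t
    induction t with
    | zero => simp
    | succ t ih => rw [pow_succ, Units.val_mul]; exact dvd_mul_sub_one ih h
  rcases le_or_gt 0 k with hk | hk
  · rw [← Int.toNat_of_nonneg hk, zpow_natCast]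
    exact hnat _
  · rw [show v ^ k = (v ^ (-k).toNat)⁻¹ by
      rw [← zpow_natCast, Int.toNat_of_nonneg (by omega : (0:ℤ) ≤ -k), zpow_neg, inv_inv]]
    exact dvd_unit_inv_sub_one _ (hnat _)

lemma prod_zpow_sum {G α : Type*} [CommGroup G] (x : G) (s : Finset α) (f : α → ℤ) :
    ∏ a ∈ s, x ^ f a = x ^ (∑ a ∈ s, f a) := by
  induction s using Finset.cons_induction with
  | empty => simp
  | cons a s ha ih => rw [Finset.prod_cons, Finset.sum_cons, ih, zpow_add]

lemma exists_cyclotomic_subset (T : Finset ℕ) :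
    (∀ m ∈ T, 0 < m) → ∀ f : Polynomial ℚ, f ∣ (∏ m ∈ T, cyclotomic m ℚ) →
    ∃ S ⊆ T, Associated f (∏ m ∈ S, cyclotomic m ℚ) := by
  classical
  induction T using Finset.induction_on with
  | empty =>
    intro _ f hf
    refine ⟨∅, Finset.Subset.refl _, ?_⟩
    rw [Finset.prod_empty] at hf ⊢
    exact associated_one_iff_isUnit.2 (isUnit_of_dvd_one hf)
  | @insert a T' ha ih =>
    intro hT f hf
    have hpos : 0 < a := hT a (Finset.mem_insert_self a T')
    have hprime : Prime (cyclotomic a ℚ) := (cyclotomic.irreducible_rat hpos).prime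
    rw [Finset.prod_insert ha] at hf
    by_cases hdvd : cyclotomic a ℚ ∣ f
    · obtain ⟨g, rfl⟩ := hdvd
      have hg : g ∣ ∏ m ∈ T', cyclotomic m ℚ :=
        (mul_dvd_mul_iff_left hprime.ne_zero).1 hf
      obtain ⟨S, hS, hassoc⟩ := ih (fun m hm => hT m (Finset.mem_insert_of_mem hm)) g hg
      refine ⟨insert a S, Finset.insert_subset_insert a hS, ?_⟩
      rw [Finset.prod_insert (fun h => ha (hS h))]
      exact hassoc.mul_left (cyclotomic a ℚ)
    · have hcop : IsCoprime f (cyclotomic a ℚ) :=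
        ((hprime.irreducible.coprime_iff_not_dvd).2 hdvd).symm
      have hfd : f ∣ ∏ m ∈ T', cyclotomic m ℚ := hcop.dvd_of_dvd_mul_left hf
      obtain ⟨S, hS, h⟩ := ih (fun m hm => hT m (Finset.mem_insert_of_mem hm)) f hfd
      exact ⟨S, hS.trans (Finset.subset_insert a T'), h⟩


end DCP

open scoped ArithmeticFunction.Moebius in
open DCP Polynomial ArithmeticFunction Finset in
/-- For `n > 1`, every divisor `d(x)` of `x^n - 1` in `ℤ[x]` with `d(0) = 1` is, modulo
`x^(r+1)`, a product over `1 ≤ j ≤ r` of `(1 - x^j)^(e j)` with integer exponents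
`|e j| ≤ 2^(ν(n)-1)`. -/
theorem divisor_congruent_product (n r : ℕ) (hn : 1 < n) (d : Polynomial ℤ)
    (hd : d ∣ Polynomial.X ^ n - 1) (h0 : d.coeff 0 = 1) :
    ∃ e : ℕ → ℤ, (∀ j, |e j| ≤ 2 ^ (n.primeFactors.card - 1)) ∧
      ∀ i ≤ r, PowerSeries.coeff i ((d.map (Int.castRingHom ℚ) : Polynomial ℚ) : PowerSeries ℚ) =
        PowerSeries.coeff i (∏ j ∈ Finset.Icc 1 r, zp (1 - (PowerSeries.X : PowerSeries ℚ) ^ j) (e j)) := by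
  classical
  have hn0 : (0:ℕ) < n := by omega
  set dq : Polynomial ℚ := d.map (Int.castRingHom ℚ) with hdq
  have hdvd : dq ∣ ∏ m ∈ n.divisors, cyclotomic m ℚ := by
    rw [prod_cyclotomic_eq_X_pow_sub_one hn0]
    have h := Polynomial.map_dvd (Int.castRingHom ℚ) hd
    simpa using h
  obtain ⟨S, hS, hassoc⟩ := exists_cyclotomic_subset n.divisors
    (fun m hm => Nat.pos_of_mem_divisors hm) dq hdvd
  have hS1 : ∀ m ∈ S, 0 < m := fun m hm => Nat.pos_of_mem_divisors (hS hm)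
  obtain ⟨u, hu⟩ := hassoc
  have hdqeq : dq = (∏ m ∈ S, cyclotomic m ℚ) * ((u⁻¹ : (Polynomial ℚ)ˣ) : Polynomial ℚ) := by
    calc dq = dq * (u : Polynomial ℚ) * ((u⁻¹ : (Polynomial ℚ)ˣ) : Polynomial ℚ) := by
          rw [mul_assoc, Units.mul_inv, mul_one]
      _ = _ := by rw [hu]
  obtain ⟨c, _, hc⟩ := Polynomial.isUnit_iff.1 (u⁻¹).isUnit
  rw [← hc] at hdqeq
  have hcoeff0 : dq.coeff 0 = 1 := by
    rw [hdq, Polynomial.coeff_map, h0]; simp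
  have hconst : (∏ m ∈ S, cyclotomic m ℚ).coeff 0 = ∏ m ∈ S, del m := by
    rw [show (∏ m ∈ S, cyclotomic m ℚ).coeff 0
        = Polynomial.constantCoeff (∏ m ∈ S, cyclotomic m ℚ) from rfl]
    rw [map_prod]
    exact Finset.prod_congr rfl fun m _ => coeff0_cyclotomic m
  have hdelsq : (∏ m ∈ S, del m) * (∏ m ∈ S, del m) = 1 := by
    rw [← Finset.prod_mul_distrib]
    apply Finset.prod_eq_one
    intro m _
    unfold del; split <;> norm_num
  have hcval : c = ∏ m ∈ S, del m := by
    have h1 : (1:ℚ) = (∏ m ∈ S, del m) * c := by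
      have := congrArg (fun p => Polynomial.coeff p 0) hdqeq
      simpa [hcoeff0, Polynomial.coeff_mul_C, hconst] using this
    calc c = ((∏ m ∈ S, del m) * (∏ m ∈ S, del m)) * c := by rw [hdelsq, one_mul]
      _ = (∏ m ∈ S, del m) * ((∏ m ∈ S, del m) * c) := by ring
      _ = ∏ m ∈ S, del m := by rw [← h1, mul_one]
  have hfact : dq = ∏ m ∈ S, (Polynomial.C (del m) * cyclotomic m ℚ) := by
    rw [Finset.prod_mul_distrib,
      show (∏ m ∈ S, Polynomial.C (del m)) = Polynomial.C (∏ m ∈ S, del m) from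
        (map_prod (Polynomial.C : ℚ →+* Polynomial ℚ) _ _).symm]
    rw [hdqeq, hcval]; ring
  have hps : ((dq : Polynomial ℚ) : PS) = ((∏ m ∈ S, FU m : PSˣ) : PS) := by
    rw [hfact]
    calc ((∏ m ∈ S, (Polynomial.C (del m) * cyclotomic m ℚ) : Polynomial ℚ) : PS)
        = ∏ m ∈ S, ((Polynomial.C (del m) * cyclotomic m ℚ : Polynomial ℚ) : PS) :=
          map_prod (Polynomial.coeToPowerSeries.ringHom) _ _
      _ = ∏ m ∈ S, ((FU m : PSˣ) : PS) := Finset.prod_congr rfl fun m _ => (FU_val m).symm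
      _ = ((∏ m ∈ S, FU m : PSˣ) : PS) := (map_prod (Units.coeHom PS) FU S).symm
  refine ⟨fun j => ∑ m ∈ S, if j ∣ m then (μ (m / j) : ℤ) else 0,
    fun j => e_bound hn S hS j, ?_⟩
  set e : ℕ → ℤ := fun j => ∑ m ∈ S, if j ∣ m then (μ (m / j) : ℤ) else 0 with he
  have hunit : (∏ m ∈ S, FU m) = ∏ j ∈ Finset.Icc 1 n, GU j ^ (e j) := by
    have step1 : ∀ m ∈ S, FU m
        = ∏ j ∈ Finset.Icc 1 n, GU j ^ (if j ∣ m then (μ (m / j) : ℤ) else 0) := by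
      intro m hm
      rw [FU_eq (hS1 m hm)]
      have hsub : m.divisors ⊆ Finset.Icc 1 n := by
        intro j hj
        rw [Nat.mem_divisors] at hj
        rw [Finset.mem_Icc]
        have hjm := Nat.le_of_dvd (hS1 m hm) hj.1
        have hmn := Nat.le_of_dvd hn0 (Nat.mem_divisors.1 (hS hm)).1
        have hjpos : 0 < j := by
          rcases Nat.eq_zero_or_pos j with h | h
          · exfalso; rw [h] at hj; exact (hS1 m hm).ne' (Nat.eq_zero_of_zero_dvd hj.1)
          · exact h
        omega
      rw [← Finset.prod_subset hsub (fun j _ hjnot => ?_)]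
      · apply Finset.prod_congr rfl
        intro j hj
        rw [if_pos (Nat.mem_divisors.1 hj).1]
      · rw [if_neg (fun hdvdjm => hjnot (Nat.mem_divisors.2 ⟨hdvdjm, (hS1 m hm).ne'⟩)),
          zpow_zero]
    rw [Finset.prod_congr rfl step1, Finset.prod_comm]
    exact Finset.prod_congr rfl fun j _ => prod_zpow_sum _ _ _
  have hfull : ((dq : Polynomial ℚ) : PS)
      = ∏ j ∈ Finset.Icc 1 n, zp (1 - (PowerSeries.X : PS) ^ j) (e j) := by
    rw [hps, hunit,
      show ((∏ j ∈ Finset.Icc 1 n, GU j ^ e j : PSˣ) : PS)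
        = ∏ j ∈ Finset.Icc 1 n, ((GU j ^ e j : PSˣ) : PS) from map_prod (Units.coeHom PS) _ _]
    apply Finset.prod_congr rfl
    intro j hj
    have hj0 : j ≠ 0 := by rw [Finset.mem_Icc] at hj; omega
    rw [← GU_val hj0, zp_unit]
  intro i hi
  set M := max n r with hM
  have hMn : Finset.Icc 1 n ⊆ Finset.Icc 1 M := Finset.Icc_subset_Icc_right (le_max_left n r)
  have hMr : Finset.Icc 1 r ⊆ Finset.Icc 1 M := Finset.Icc_subset_Icc_right (le_max_right n r)
  have hext : ((dq : Polynomial ℚ) : PS)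
      = ∏ j ∈ Finset.Icc 1 M, zp (1 - (PowerSeries.X : PS) ^ j) (e j) := by
    rw [hfull]
    apply Finset.prod_subset hMn
    intro j hjM hjn
    have hjgt : n < j := by
      rw [Finset.mem_Icc] at hjM
      rw [Finset.mem_Icc] at hjn
      omega
    have hej : e j = 0 := by
      rw [he]
      apply Finset.sum_eq_zero
      intro m hm
      rw [if_neg]
      intro hdvdjm
      have h1 := Nat.le_of_dvd (hS1 m hm) hdvdjm
      have h2 := Nat.le_of_dvd hn0 (Nat.mem_divisors.1 (hS hm)).1
      omega
    rw [hej]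
    unfold zp
    simp
  have hsplit : ∏ j ∈ Finset.Icc 1 M, zp (1 - (PowerSeries.X : PS) ^ j) (e j)
      = (∏ j ∈ Finset.Icc 1 M \ Finset.Icc 1 r, zp (1 - (PowerSeries.X : PS) ^ j) (e j))
        * ∏ j ∈ Finset.Icc 1 r, zp (1 - (PowerSeries.X : PS) ^ j) (e j) :=
    (Finset.prod_sdiff hMr).symm
  have hQ : (PowerSeries.X : PS) ^ (r+1) ∣
      (∏ j ∈ Finset.Icc 1 M \ Finset.Icc 1 r, zp (1 - (PowerSeries.X : PS) ^ j) (e j)) - 1 := by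
    apply dvd_prod_sub_one
    intro j hj
    rw [Finset.mem_sdiff, Finset.mem_Icc, Finset.mem_Icc] at hj
    have hj0 : j ≠ 0 := by omega
    have hjr : r + 1 ≤ j := by omega
    rw [← GU_val hj0, zp_unit]
    apply dvd_zpow_sub_one
    rw [GU_val hj0]
    rw [show (1 : PS) - (PowerSeries.X : PS) ^ j - 1 = -((PowerSeries.X : PS) ^ j) by ring]
    exact dvd_neg.2 (pow_dvd_pow _ hjr)
  have hdvd2 : (PowerSeries.X : PS) ^ (r+1) ∣
      ((dq : Polynomial ℚ) : PS) - ∏ j ∈ Finset.Icc 1 r, zp (1 - (PowerSeries.X : PS) ^ j) (e j) := by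
    rw [hext, hsplit]
    rw [show (∏ j ∈ Finset.Icc 1 M \ Finset.Icc 1 r, zp (1 - (PowerSeries.X : PS) ^ j) (e j))
          * (∏ j ∈ Finset.Icc 1 r, zp (1 - (PowerSeries.X : PS) ^ j) (e j))
          - ∏ j ∈ Finset.Icc 1 r, zp (1 - (PowerSeries.X : PS) ^ j) (e j)
        = ((∏ j ∈ Finset.Icc 1 M \ Finset.Icc 1 r, zp (1 - (PowerSeries.X : PS) ^ j) (e j)) - 1)
          * ∏ j ∈ Finset.Icc 1 r, zp (1 - (PowerSeries.X : PS) ^ j) (e j) by ring]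
    exact hQ.mul_right _
  have hcoeff := (PowerSeries.X_pow_dvd_iff.1 hdvd2) i (by omega)
  rw [map_sub] at hcoeff
  exact sub_eq_zero.1 hcoeff
end

section
/- There exists a constant c_1(r) depending only on r such that for all natural numbers n > 1, H(r,n) ≤ 2^(r·ν(n)) / (2^r · r!) + c_1(r) · 2^((r-1)·ν(n)). -/
/-- `H r n` is the maximal absolute value of the coefficient of `x^r` over all divisors of
`x^n - 1` in `ℤ[x]`. -/
noncomputable def H (r n : ℕ) : ℤ :=
  sSup {c : ℤ | ∃ d : Polynomial ℤ, d ∣ Polynomial.X ^ n - 1 ∧ c = |d.coeff r|}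

/-!
A divisor of `X^n - 1` in `ℤ[X]` is `±∏_{m ∈ S} Φ_m` for a set `S` of divisors of `n`. Möbius
inversion of `∏_{k ∣ m} Φ_k = X^m - 1` in the unit group of `ℤ⟦X⟧` turns this product into
`∏_{k ∣ n} (X^k - 1)^(E_k)` with `E_k = ∑_{m ∈ S, k ∣ m} μ(m/k)`, whose coefficients are bounded
in absolute value by those of `∏_{k ∣ n} (1 - X^k)^(-|E_k|)`. Always `|E_k| ≤ 2^ν`, and since `μ`
sums to zero over the divisors of `n > 1`, even `|E_1| ≤ 2^(ν-1)`. The factor `(1 - X)^(-|E_1|)`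
contributes at most `binom(2^(ν-1) + r, r) = 2^(r(ν-1))/r! + O(2^((r-1)ν))` to the coefficient of
`X^r`. A monomial of degree `j` in the `X^k` with `k ≥ 2` has at most `j/2` factors, so the
factors with `k ≥ 2` cost only `O(2^(ν j/2))` in degree `j` and stay in the lower order term.
-/

open Finset PowerSeries
open scoped Polynomial ArithmeticFunction.Moebius Nat

theorem exists_subset_associated_prod_of_dvd_prod {α ι : Type*} [CommMonoid α]
    [DecompositionMonoid α] {s : Finset ι} {p : ι → α} (hp : ∀ i ∈ s, Irreducible (p i)) {d : α}
    (hd : d ∣ ∏ i ∈ s, p i) : ∃ t ⊆ s, Associated d (∏ i ∈ t, p i) := by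
  classical
  induction s using Finset.induction_on generalizing d with
  | empty =>
    exact ⟨∅, Subset.rfl, by simpa [associated_one_iff_isUnit] using isUnit_of_dvd_one hd⟩
  | insert a s has ih =>
    rw [prod_insert has] at hd
    obtain ⟨d₁, d₂, hd₁, hd₂, rfl⟩ := exists_dvd_and_dvd_of_dvd_mul hd
    obtain ⟨t, hts, ht⟩ := ih (fun i hi => hp i (mem_insert_of_mem hi)) hd₂
    obtain ⟨c, hc⟩ := hd₁
    rcases (hp a (mem_insert_self a s)).isUnit_or_isUnit hc with hu | hu
    · exact ⟨t, hts.trans (subset_insert a s),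
        by simpa using (associated_one_iff_isUnit.2 hu).mul_mul ht⟩
    · refine ⟨insert a t, insert_subset_insert a hts, ?_⟩
      rw [prod_insert fun h => has (hts h)]
      exact Associated.mul_mul ⟨hu.unit, hc.symm⟩ ht

theorem exists_subset_divisors_associated_prod_cyclotomic {n : ℕ} (hn : n ≠ 0) {d : ℤ[X]}
    (hd : d ∣ Polynomial.X ^ n - 1) :
    ∃ S ⊆ n.divisors, Associated d (∏ m ∈ S, Polynomial.cyclotomic m ℤ) := by
  rw [← Polynomial.prod_cyclotomic_eq_X_pow_sub_one (Nat.pos_of_ne_zero hn)] at hd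
  exact exists_subset_associated_prod_of_dvd_prod
    (fun m hm => Polynomial.cyclotomic.irreducible (Nat.pos_of_mem_divisors hm)) hd

theorem Polynomial.abs_coeff_eq_of_associated {p q : ℤ[X]} (h : Associated p q) (r : ℕ) :
    |p.coeff r| = |q.coeff r| := by
  obtain ⟨u, rfl⟩ := h
  obtain ⟨c, hc, hcu⟩ := Polynomial.isUnit_iff.1 u.isUnit
  rw [← hcu, Polynomial.coeff_mul_C, abs_mul, Int.isUnit_iff_abs_eq.1 hc, mul_one]

theorem Polynomial.coe_prod {R ι : Type*} [CommSemiring R] (s : Finset ι) (f : ι → R[X]) :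
    ((∏ i ∈ s, f i : R[X]) : R⟦X⟧) = ∏ i ∈ s, (f i : R⟦X⟧) :=
  map_prod Polynomial.coeToPowerSeries.ringHom f s

theorem Polynomial.coe_X_pow_sub_one {R : Type*} [CommRing R] (m : ℕ) :
    ((Polynomial.X ^ m - 1 : R[X]) : R⟦X⟧) = PowerSeries.X ^ m - 1 := by
  push_cast
  rfl

theorem Finset.prod_zpow_eq_zpow_sum {ι G : Type*} [CommGroup G] (s : Finset ι) (f : ι → ℤ)
    (a : G) : ∏ i ∈ s, a ^ f i = a ^ ∑ i ∈ s, f i :=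
  s.cons_induction (by simp) fun _ _ _ ih => by rw [prod_cons, sum_cons, ih, zpow_add]

theorem Finset.two_mul_abs_sum_le_sum_abs {ι R : Type*} [CommRing R] [LinearOrder R]
    [IsStrictOrderedRing R] {s t : Finset ι} (hst : s ⊆ t) {f : ι → R}
    (hf : ∑ i ∈ t, f i = 0) : 2 * |∑ i ∈ s, f i| ≤ ∑ i ∈ t, |f i| := by
  classical
  have hcompl : ∑ i ∈ t \ s, f i = -∑ i ∈ s, f i := by
    rw [eq_neg_iff_add_eq_zero, sum_sdiff hst, hf]
  calc 2 * |∑ i ∈ s, f i| = |∑ i ∈ s, f i| + |∑ i ∈ t \ s, f i| := by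
        rw [hcompl, abs_neg, two_mul]
    _ ≤ ∑ i ∈ s, |f i| + ∑ i ∈ t \ s, |f i| :=
        add_le_add (abs_sum_le_sum_abs _ _) (abs_sum_le_sum_abs _ _)
    _ = ∑ i ∈ t, |f i| := by rw [add_comm, sum_sdiff hst]

theorem ArithmeticFunction.sum_abs_moebius_divisors {n : ℕ} (hn : n ≠ 0) :
    ∑ d ∈ n.divisors, |μ d| = 2 ^ #n.primeFactors := by
  simp_rw [abs_moebius]
  rw [← sum_filter, Nat.sum_divisors_filter_squarefree hn]
  simp [Nat.factors_eq, Nat.toFinset_factors]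

theorem ArithmeticFunction.sum_moebius_divisors_eq_zero {n : ℕ} (hn : 1 < n) :
    ∑ d ∈ n.divisors, μ d = 0 := by
  rw [← coe_mul_zeta_apply, moebius_mul_coe_zeta, one_apply_ne hn.ne']

def xPowSubOneExponent (S : Finset ℕ) (k : ℕ) : ℤ :=
  ∑ m ∈ S with k ∣ m, μ (m / k)

theorem natAbs_xPowSubOneExponent_le {n : ℕ} (hn : n ≠ 0) {S : Finset ℕ} (hS : S ⊆ n.divisors)
    (k : ℕ) : (xPowSubOneExponent S k).natAbs ≤ 2 ^ #n.primeFactors := by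
  have hinj : Set.InjOn (· / k) ({m ∈ S | k ∣ m} : Finset ℕ) := fun m hm m' hm' h =>
    (Nat.div_left_inj (mem_filter.1 (mem_coe.1 hm)).2 (mem_filter.1 (mem_coe.1 hm')).2).1 h
  have himage : {m ∈ S | k ∣ m}.image (· / k) ⊆ n.divisors := by
    simp only [image_subset_iff, mem_filter, Nat.mem_divisors]
    rintro m ⟨hmS, hkm⟩
    obtain ⟨hmn, hn⟩ := Nat.mem_divisors.1 (hS hmS)
    exact ⟨(Nat.div_dvd_of_dvd hkm).trans hmn, hn⟩
  suffices |xPowSubOneExponent S k| ≤ 2 ^ #n.primeFactors by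
    rwa [Int.abs_eq_natAbs, ← Nat.cast_ofNat, ← Nat.cast_pow, Nat.cast_le] at this
  calc |xPowSubOneExponent S k| ≤ ∑ m ∈ S with k ∣ m, |μ (m / k)| := abs_sum_le_sum_abs _ _
    _ = ∑ d ∈ {m ∈ S | k ∣ m}.image (· / k), |μ d| :=
        (sum_image (f := fun d => |μ d|) hinj).symm
    _ ≤ ∑ d ∈ n.divisors, |μ d| :=
        sum_le_sum_of_subset_of_nonneg himage fun _ _ _ => abs_nonneg _
    _ = 2 ^ #n.primeFactors := ArithmeticFunction.sum_abs_moebius_divisors hn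

theorem natAbs_xPowSubOneExponent_one_le {n : ℕ} (hn : 1 < n) {S : Finset ℕ}
    (hS : S ⊆ n.divisors) : (xPowSubOneExponent S 1).natAbs ≤ 2 ^ (#n.primeFactors - 1) := by
  have h := two_mul_abs_sum_le_sum_abs hS (ArithmeticFunction.sum_moebius_divisors_eq_zero hn)
  have hν : #n.primeFactors ≠ 0 := (card_pos.2 (Nat.nonempty_primeFactors.2 hn)).ne'
  rw [ArithmeticFunction.sum_abs_moebius_divisors (by omega), Int.abs_eq_natAbs,
    ← mul_pow_sub_one hν] at h
  have hE : xPowSubOneExponent S 1 = ∑ m ∈ S, μ m := by simp [xPowSubOneExponent]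
  rw [hE]
  exact_mod_cast (mul_le_mul_iff_right₀ two_pos).1 h

namespace PowerSeries

section Majorization

variable {R : Type*} [CommRing R] [LinearOrder R] [IsStrictOrderedRing R]

def MajorizedBy (f g : R⟦X⟧) : Prop :=
  ∀ i, |coeff i f| ≤ coeff i g

theorem MajorizedBy.coeff_nonneg {f g : R⟦X⟧} (h : MajorizedBy f g) (i : ℕ) :
    0 ≤ coeff i g :=
  (abs_nonneg _).trans (h i)

theorem majorizedBy_self {f : R⟦X⟧} (hf : ∀ i, 0 ≤ coeff i f) : MajorizedBy f f :=
  fun i => (abs_of_nonneg (hf i)).le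

theorem one_majorizedBy_one : MajorizedBy (1 : R⟦X⟧) 1 :=
  majorizedBy_self fun i => by rw [coeff_one]; split_ifs <;> simp

theorem MajorizedBy.mul {f₁ f₂ g₁ g₂ : R⟦X⟧} (h₁ : MajorizedBy f₁ g₁) (h₂ : MajorizedBy f₂ g₂) :
    MajorizedBy (f₁ * f₂) (g₁ * g₂) := fun i => by
  rw [coeff_mul, coeff_mul]
  refine (abs_sum_le_sum_abs _ _).trans (sum_le_sum fun p _ => ?_)
  rw [abs_mul]
  exact mul_le_mul (h₁ p.1) (h₂ p.2) (abs_nonneg _) (h₁.coeff_nonneg p.1)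

theorem MajorizedBy.pow {f g : R⟦X⟧} (h : MajorizedBy f g) (a : ℕ) :
    MajorizedBy (f ^ a) (g ^ a) := by
  induction a with
  | zero => simpa using one_majorizedBy_one
  | succ a ih => simpa only [pow_succ] using ih.mul h

theorem MajorizedBy.prod {ι : Type*} {s : Finset ι} {f g : ι → R⟦X⟧}
    (h : ∀ i ∈ s, MajorizedBy (f i) (g i)) : MajorizedBy (∏ i ∈ s, f i) (∏ i ∈ s, g i) := by
  classical
  induction s using Finset.induction_on with
  | empty => simpa using one_majorizedBy_one
  | insert a s has ih =>
    rw [prod_insert has, prod_insert has]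
    exact (h a (mem_insert_self a s)).mul (ih fun i hi => h i (mem_insert_of_mem hi))

end Majorization

section Units

variable {R : Type*} [CommRing R]

variable (R) in
def invOneSubXPow (k : ℕ) : R⟦X⟧ :=
  mk fun i => if k ∣ i then 1 else 0

theorem invOneSubXPow_one : invOneSubXPow R 1 = mk 1 := by
  ext i
  simp [invOneSubXPow]

theorem invOneSubXPow_eq_expand {k : ℕ} (hk : k ≠ 0) :
    invOneSubXPow R k = expand k hk (mk 1) := by
  ext i
  simp [invOneSubXPow, coeff_expand]

theorem invOneSubXPow_mul_one_sub_X_pow {k : ℕ} (hk : k ≠ 0) :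
    invOneSubXPow R k * (1 - X ^ k) = 1 := by
  simpa [invOneSubXPow_eq_expand hk] using congrArg (expand k hk) (mk_one_mul_one_sub_eq_one R)

theorem coeff_invOneSubXPow_pow {k : ℕ} (hk : k ≠ 0) (a i : ℕ) :
    coeff i (invOneSubXPow R k ^ a) = if k ∣ i then coeff (i / k) ((mk 1 : R⟦X⟧) ^ a) else 0 := by
  rw [invOneSubXPow_eq_expand hk, ← map_pow, coeff_expand]

variable (R) in
noncomputable def xPowSubOneUnit (k : ℕ) : R⟦X⟧ˣ :=
  if hk : k = 0 then 1 else
    Units.mkOfMulEqOne (X ^ k - 1) (-invOneSubXPow R k) (by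
      linear_combination invOneSubXPow_mul_one_sub_X_pow (R := R) hk)

theorem val_xPowSubOneUnit {k : ℕ} (hk : k ≠ 0) :
    (xPowSubOneUnit R k : R⟦X⟧) = X ^ k - 1 := by
  rw [xPowSubOneUnit, dif_neg hk, Units.val_mkOfMulEqOne]

theorem val_inv_xPowSubOneUnit {k : ℕ} (hk : k ≠ 0) :
    (↑(xPowSubOneUnit R k)⁻¹ : R⟦X⟧) = -invOneSubXPow R k := by
  rw [xPowSubOneUnit, dif_neg hk]
  rfl

theorem isUnit_coe_cyclotomic (m : ℕ) : IsUnit ((Polynomial.cyclotomic m R : R[X]) : R⟦X⟧) := by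
  rcases eq_or_ne m 0 with rfl | hm
  · simp
  obtain ⟨c, hc⟩ := Polynomial.cyclotomic.dvd_X_pow_sub_one m R
  refine isUnit_of_mul_isUnit_left (y := (c : R⟦X⟧)) ?_
  rw [← Polynomial.coe_mul, ← hc, Polynomial.coe_X_pow_sub_one, ← val_xPowSubOneUnit hm]
  exact Units.isUnit _

variable (R) in
noncomputable def cyclotomicUnit (m : ℕ) : R⟦X⟧ˣ :=
  (isUnit_coe_cyclotomic m).unit

theorem val_cyclotomicUnit (m : ℕ) :
    (cyclotomicUnit R m : R⟦X⟧) = (Polynomial.cyclotomic m R : R[X]) :=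
  IsUnit.unit_spec _

theorem prod_cyclotomicUnit_divisors {m : ℕ} (hm : 0 < m) :
    ∏ i ∈ m.divisors, cyclotomicUnit R i = xPowSubOneUnit R m := by
  ext1
  simp_rw [Units.coe_prod, val_cyclotomicUnit, val_xPowSubOneUnit hm.ne', ← Polynomial.coe_prod,
    Polynomial.prod_cyclotomic_eq_X_pow_sub_one hm, Polynomial.coe_X_pow_sub_one]

theorem cyclotomicUnit_eq_prod_zpow_moebius {m : ℕ} (hm : 0 < m) :
    cyclotomicUnit R m = ∏ x ∈ m.divisorsAntidiagonal, xPowSubOneUnit R x.2 ^ μ x.1 :=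
  (ArithmeticFunction.prod_eq_iff_prod_pow_moebius_eq.mp
    (fun _ => prod_cyclotomicUnit_divisors) m hm).symm

theorem coe_prod_cyclotomic_eq_prod_zpow {n : ℕ} {S : Finset ℕ} (hS : S ⊆ n.divisors) :
    ((∏ m ∈ S, Polynomial.cyclotomic m R : R[X]) : R⟦X⟧) =
      ∏ k ∈ n.divisors, ↑(xPowSubOneUnit R k ^ xPowSubOneExponent S k) := by
  simp_rw [Polynomial.coe_prod, ← val_cyclotomicUnit, ← Units.coe_prod]
  congr 1
  calc ∏ m ∈ S, cyclotomicUnit R m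
      = ∏ m ∈ S, ∏ k ∈ m.divisors, xPowSubOneUnit R k ^ μ (m / k) :=
        prod_congr rfl fun m hm => by
          rw [cyclotomicUnit_eq_prod_zpow_moebius (Nat.pos_of_mem_divisors (hS hm)),
            Nat.prod_divisorsAntidiagonal' fun a b => xPowSubOneUnit R b ^ μ a]
    _ = ∏ k ∈ n.divisors, ∏ m ∈ S with k ∣ m, xPowSubOneUnit R k ^ μ (m / k) := by
        refine prod_comm' fun m k => ?_
        have hm := @hS m
        simp only [mem_filter, Nat.mem_divisors] at hm ⊢
        constructor
        · rintro ⟨hmS, hkm, -⟩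
          exact ⟨⟨hmS, hkm⟩, hkm.trans (hm hmS).1, (hm hmS).2⟩
        · rintro ⟨⟨hmS, hkm⟩, -⟩
          exact ⟨hmS, hkm, ne_zero_of_dvd_ne_zero (hm hmS).2 (hm hmS).1⟩
    _ = ∏ k ∈ n.divisors, xPowSubOneUnit R k ^ xPowSubOneExponent S k :=
        prod_congr rfl fun k _ => prod_zpow_eq_zpow_sum _ _ _

end Units

section Ordered

variable {R : Type*} [CommRing R] [LinearOrder R] [IsStrictOrderedRing R]

theorem invOneSubXPow_majorizedBy_self (k : ℕ) :
    MajorizedBy (invOneSubXPow R k) (invOneSubXPow R k) :=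
  majorizedBy_self fun i => by rw [invOneSubXPow, coeff_mk]; split_ifs <;> simp

theorem xPowSubOneUnit_zpow_majorizedBy {k : ℕ} (hk : k ≠ 0) (E : ℤ) :
    MajorizedBy ↑(xPowSubOneUnit R k ^ E) (invOneSubXPow R k ^ E.natAbs) := by
  have hu : MajorizedBy ↑(xPowSubOneUnit R k) (invOneSubXPow R k) := fun i => by
    rw [val_xPowSubOneUnit hk, map_sub, coeff_X_pow, coeff_one, invOneSubXPow, coeff_mk]
    rcases eq_or_ne i 0 with rfl | hi
    · simp [hk.symm]
    · split_ifs <;> simp_all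
  have hinv : MajorizedBy ↑(xPowSubOneUnit R k)⁻¹ (invOneSubXPow R k) := fun i => by
    rw [val_inv_xPowSubOneUnit hk, map_neg, abs_neg]
    exact invOneSubXPow_majorizedBy_self k i
  obtain ⟨a, rfl | rfl⟩ := Int.eq_nat_or_neg E
  · rw [zpow_natCast, Units.val_pow_eq_pow_val, Int.natAbs_natCast]
    exact hu.pow a
  · rw [zpow_neg, zpow_natCast, ← inv_pow, Units.val_pow_eq_pow_val, Int.natAbs_neg,
      Int.natAbs_natCast]
    exact hinv.pow a

end Ordered

theorem coeff_mk_one_pow_le (a i : ℕ) : coeff i ((mk 1 : ℤ⟦X⟧) ^ a) ≤ (a + i).choose i := by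
  rcases a with _ | a
  · rw [pow_zero, coeff_one]; split_ifs <;> simp
  · rw [mk_one_pow_eq_mk_choose_add, coeff_mk, Nat.choose_symm_add]
    exact_mod_cast Nat.choose_le_choose i (by omega)

theorem coeff_invOneSubXPow_pow_le {k : ℕ} (hk : k ≠ 0) (a i : ℕ) :
    coeff i (invOneSubXPow ℤ k ^ a) ≤ (a + 1) ^ (i / k) := by
  rw [coeff_invOneSubXPow_pow hk]
  split_ifs
  · exact (coeff_mk_one_pow_le a _).trans (mod_cast Nat.choose_add_le_add_one_pow a _)
  · positivity

theorem prod_coeff_invOneSubXPow_pow_le {s : Finset ℕ} (hs : ∀ k ∈ s, 2 ≤ k) {e : ℕ → ℕ}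
    {A : ℕ} (he : ∀ k ∈ s, e k ≤ A) {j : ℕ} {l : ℕ →₀ ℕ} (hl : l ∈ s.finsuppAntidiag j) :
    ∏ k ∈ s, coeff (l k) (invOneSubXPow ℤ k ^ e k) ≤ ((A : ℤ) + 1) ^ (j / 2) := by
  have hexp : 2 * ∑ k ∈ s, l k / k ≤ j := by
    rw [← (mem_finsuppAntidiag.1 hl).1, mul_sum]
    refine sum_le_sum fun k hk => ?_
    calc 2 * (l k / k) ≤ k * (l k / k) := Nat.mul_le_mul_right _ (hs k hk)
      _ ≤ l k := Nat.mul_div_le (l k) k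
  calc ∏ k ∈ s, coeff (l k) (invOneSubXPow ℤ k ^ e k)
      ≤ ∏ k ∈ s, ((A : ℤ) + 1) ^ (l k / k) := by
        refine prod_le_prod
          (fun k _ => ((invOneSubXPow_majorizedBy_self k).pow _).coeff_nonneg _) fun k hk => ?_
        refine (coeff_invOneSubXPow_pow_le (by have := hs k hk; omega) _ _).trans ?_
        gcongr
        exact_mod_cast he k hk
    _ = ((A : ℤ) + 1) ^ ∑ k ∈ s, l k / k := prod_pow_eq_pow_sum _ _ _
    _ ≤ ((A : ℤ) + 1) ^ (j / 2) := pow_le_pow_right₀ (by omega) (by omega)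

theorem coeff_prod_invOneSubXPow_pow_le {s : Finset ℕ} (hs : ∀ k ∈ s, 2 ≤ k) {e : ℕ → ℕ}
    {A : ℕ} (he : ∀ k ∈ s, e k ≤ A) (j : ℕ) :
    coeff j (∏ k ∈ s, invOneSubXPow ℤ k ^ e k) ≤
      #((Icc 2 j).finsuppAntidiag j) * (A + 1) ^ (j / 2) := by
  set F := {l ∈ s.finsuppAntidiag j | ∀ k ∈ s, k ∣ l k}
  have hvanish : ∀ l ∈ s.finsuppAntidiag j, l ∉ F →
      ∏ k ∈ s, coeff (l k) (invOneSubXPow ℤ k ^ e k) = 0 := by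
    intro l hl hlF
    obtain ⟨k, hk, hkl⟩ : ∃ k ∈ s, ¬k ∣ l k := by simpa [F, hl] using hlF
    refine prod_eq_zero hk ?_
    rw [coeff_invOneSubXPow_pow (by have := hs k hk; omega), if_neg hkl]
  have hFsub : F ⊆ (Icc 2 j).finsuppAntidiag j := by
    intro l hl
    obtain ⟨hl, hdvd⟩ := mem_filter.1 hl
    obtain ⟨hsum, hsupp⟩ := mem_finsuppAntidiag.1 hl
    refine mem_finsuppAntidiag'.2 ⟨(mem_finsuppAntidiag'.1 hl).1, fun k hk => ?_⟩
    have hks := hsupp hk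
    have hkl := Nat.le_of_dvd (Nat.pos_of_ne_zero (Finsupp.mem_support_iff.1 hk)) (hdvd k hks)
    have hlj : l k ≤ j := hsum ▸ single_le_sum (fun _ _ => Nat.zero_le _) hks
    exact mem_Icc.2 ⟨hs k hks, hkl.trans hlj⟩
  rw [coeff_prod, ← sum_subset (filter_subset _ _) hvanish]
  calc ∑ l ∈ F, ∏ k ∈ s, coeff (l k) (invOneSubXPow ℤ k ^ e k)
      ≤ #F • ((A : ℤ) + 1) ^ (j / 2) := sum_le_card_nsmul _ _ _ fun l hl =>
        prod_coeff_invOneSubXPow_pow_le hs he (filter_subset _ _ hl)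
    _ ≤ #((Icc 2 j).finsuppAntidiag j) * ((A : ℤ) + 1) ^ (j / 2) := by
        rw [nsmul_eq_mul]
        gcongr

-- The `i`-th term bounds the product of the coefficient of `X^i` in `(1 - X)^(-a)` and the
-- coefficient of `X^(r-i)` in a product of factors `(1 - X^k)^(-2a)` with `k ≥ 2`.
def coeffMajorant (a r : ℕ) : ℕ :=
  ∑ i ∈ range (r + 1),
    (a + i).choose i * #((Icc 2 (r - i)).finsuppAntidiag (r - i)) * (2 * a + 1) ^ ((r - i) / 2)

theorem coeff_mk_one_pow_mul_prod_le {s : Finset ℕ} (hs : ∀ k ∈ s, 2 ≤ k) {e₁ a : ℕ}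
    (he₁ : e₁ ≤ a) {e : ℕ → ℕ} (he : ∀ k ∈ s, e k ≤ 2 * a) (r : ℕ) :
    coeff r ((mk 1 : ℤ⟦X⟧) ^ e₁ * ∏ k ∈ s, invOneSubXPow ℤ k ^ e k) ≤ coeffMajorant a r := by
  rw [coeff_mul, Nat.sum_antidiagonal_eq_sum_range_succ_mk, coeffMajorant]
  push_cast
  refine sum_le_sum fun i _ => ?_
  rw [mul_assoc]
  refine mul_le_mul ((coeff_mk_one_pow_le _ _).trans (mod_cast Nat.choose_le_choose i (by omega)))
    (coeff_prod_invOneSubXPow_pow_le hs he _) ?_ (by positivity)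
  exact (MajorizedBy.prod fun k _ => (invOneSubXPow_majorizedBy_self k).pow (e k)).coeff_nonneg _

end PowerSeries

theorem Nat.add_pow_le_pow_add_mul_pow {a : ℕ} (ha : 1 ≤ a) (c m : ℕ) :
    (a + c) ^ m ≤ a ^ m + (c + 1) ^ m * a ^ (m - 1) := by
  have hbinom : (c + 1) ^ m = ∑ i ∈ range (m + 1), c ^ (m - i) * m.choose i := by
    rw [add_comm, add_pow]
    simp only [one_pow, one_mul, Nat.cast_id]
  rw [add_pow, sum_range_succ, add_comm]
  simp only [Nat.cast_id, Nat.sub_self, pow_zero, mul_one, Nat.choose_self]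
  gcongr
  calc ∑ i ∈ range m, a ^ i * c ^ (m - i) * m.choose i
      ≤ ∑ i ∈ range m, a ^ (m - 1) * (c ^ (m - i) * m.choose i) :=
        sum_le_sum fun i hi => by
          rw [← mul_assoc]
          gcongr
          exact Nat.le_sub_one_of_lt (mem_range.1 hi)
    _ ≤ a ^ (m - 1) * ∑ i ∈ range (m + 1), c ^ (m - i) * m.choose i := by
        rw [← mul_sum]
        gcongr
        omega
    _ = (c + 1) ^ m * a ^ (m - 1) := by rw [hbinom, mul_comm]

theorem choose_add_le_pow_div_factorial {a : ℕ} (ha : 1 ≤ a) (r : ℕ) :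
    ((a + r).choose r : ℝ) ≤ a ^ r / r ! + (r + 1) ^ r * a ^ (r - 1) := by
  calc ((a + r).choose r : ℝ) ≤ ((a + r : ℕ) : ℝ) ^ r / r ! := Nat.choose_le_pow_div r (a + r)
    _ ≤ ((a ^ r + (r + 1) ^ r * a ^ (r - 1) : ℕ) : ℝ) / r ! := by
        gcongr
        exact_mod_cast Nat.add_pow_le_pow_add_mul_pow ha r r
    _ ≤ a ^ r / r ! + (r + 1) ^ r * a ^ (r - 1) := by
        push_cast
        rw [add_div]
        gcongr
        exact div_le_self (by positivity) (mod_cast r.factorial_pos)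

theorem Nat.choose_mul_pow_le {a r i : ℕ} (ha : 1 ≤ a) (hi : i < r) :
    (a + i).choose i * (2 * a + 1) ^ ((r - i) / 2) ≤ 3 ^ (r - 1) * a ^ (r - 1) := by
  calc (a + i).choose i * (2 * a + 1) ^ ((r - i) / 2)
      ≤ (3 * a) ^ i * (3 * a) ^ ((r - i) / 2) := by
        gcongr
        · exact (Nat.choose_add_le_add_one_pow a i).trans (by gcongr; omega)
        · omega
    _ ≤ (3 * a) ^ (r - 1) := by
        rw [← pow_add]
        exact Nat.pow_le_pow_right (by omega) (by omega)
    _ = 3 ^ (r - 1) * a ^ (r - 1) := mul_pow _ _ _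

def coeffMajorantConst (r : ℕ) : ℕ :=
  (r + 1) ^ r + (∑ i ∈ range r, #((Icc 2 (r - i)).finsuppAntidiag (r - i))) * 3 ^ (r - 1)

theorem coeffMajorant_le {a : ℕ} (ha : 1 ≤ a) (r : ℕ) :
    (coeffMajorant a r : ℝ) ≤ a ^ r / r ! + coeffMajorantConst r * a ^ (r - 1) := by
  have htail : ∑ i ∈ range r, (a + i).choose i * #((Icc 2 (r - i)).finsuppAntidiag (r - i)) *
        (2 * a + 1) ^ ((r - i) / 2) ≤
      (∑ i ∈ range r, #((Icc 2 (r - i)).finsuppAntidiag (r - i))) * (3 ^ (r - 1) * a ^ (r - 1)) := by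
    rw [sum_mul]
    refine sum_le_sum fun i hi => ?_
    rw [mul_right_comm, mul_comm]
    exact Nat.mul_le_mul_left _ (Nat.choose_mul_pow_le ha (mem_range.1 hi))
  have hsplit : coeffMajorant a r = ∑ i ∈ range r, (a + i).choose i *
      #((Icc 2 (r - i)).finsuppAntidiag (r - i)) * (2 * a + 1) ^ ((r - i) / 2) +
        (a + r).choose r := by
    simp [coeffMajorant, sum_range_succ]
  rw [hsplit, coeffMajorantConst]
  have hmain := choose_add_le_pow_div_factorial ha r
  have htail' := (Nat.cast_le (α := ℝ)).2 htail
  push_cast at htail' ⊢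
  linarith

theorem abs_coeff_le_coeffMajorant {n : ℕ} (hn : 1 < n) {d : ℤ[X]}
    (hd : d ∣ Polynomial.X ^ n - 1) (r : ℕ) :
    |d.coeff r| ≤ coeffMajorant (2 ^ (#n.primeFactors - 1)) r := by
  obtain ⟨S, hS, hdS⟩ := exists_subset_divisors_associated_prod_cyclotomic (by omega) hd
  rw [Polynomial.abs_coeff_eq_of_associated hdS, ← Polynomial.coeff_coe,
    coe_prod_cyclotomic_eq_prod_zpow hS]
  have hmaj := MajorizedBy.prod (s := n.divisors) fun k hk =>
    xPowSubOneUnit_zpow_majorizedBy (R := ℤ) (Nat.pos_of_mem_divisors hk).ne'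
      (xPowSubOneExponent S k)
  refine (hmaj r).trans ?_
  rw [← mul_prod_erase _ _ (Nat.one_mem_divisors.2 (by omega)), invOneSubXPow_one]
  have hν : #n.primeFactors ≠ 0 := (card_pos.2 (Nat.nonempty_primeFactors.2 hn)).ne'
  refine coeff_mk_one_pow_mul_prod_le (fun k hk => ?_) (natAbs_xPowSubOneExponent_one_le hn hS)
    (fun k _ => ?_) r
  · have := Nat.pos_of_mem_divisors (mem_of_mem_erase hk)
    have := ne_of_mem_erase hk
    omega
  · rw [mul_pow_sub_one hν]
    exact natAbs_xPowSubOneExponent_le (by omega) hS k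

theorem H_le_coeffMajorant {n : ℕ} (hn : 1 < n) (r : ℕ) :
    H r n ≤ coeffMajorant (2 ^ (#n.primeFactors - 1)) r :=
  csSup_le ⟨_, 1, one_dvd _, rfl⟩ fun _ ⟨_, hd, hc⟩ => hc ▸ abs_coeff_le_coeffMajorant hn hd r

/-- There is a constant `c₁ = c₁(r)` such that for all `n > 1`,
`H r n ≤ 2^(r·ν(n)) / (2^r · r!) + c₁ · 2^((r-1)·ν(n))`. -/
theorem H_upper_bound (r : ℕ) :
    ∃ c₁ : ℝ, ∀ n : ℕ, 1 < n →
      (H r n : ℝ) ≤ (2 : ℝ) ^ (r * n.primeFactors.card) / (2 ^ r * r.factorial) +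
        c₁ * 2 ^ ((r - 1) * n.primeFactors.card) := by
  refine ⟨coeffMajorantConst r, fun n hn => ?_⟩
  set ν := #n.primeFactors
  have hν : ν ≠ 0 := (card_pos.2 (Nat.nonempty_primeFactors.2 hn)).ne'
  have hmain : ((2 : ℝ) ^ (ν - 1)) ^ r / r ! = 2 ^ (r * ν) / (2 ^ r * r !) := by
    rw [mul_comm r, pow_mul, ← pow_sub_one_mul hν, mul_pow]
    field_simp
  have hlower : ((2 : ℝ) ^ (ν - 1)) ^ (r - 1) ≤ 2 ^ ((r - 1) * ν) := by
    rw [← pow_mul, mul_comm]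
    exact pow_le_pow_right₀ one_le_two (by gcongr; omega)
  calc (H r n : ℝ) ≤ coeffMajorant (2 ^ (ν - 1)) r := mod_cast H_le_coeffMajorant hn r
    _ ≤ ((2 : ℝ) ^ (ν - 1)) ^ r / r ! + coeffMajorantConst r * ((2 : ℝ) ^ (ν - 1)) ^ (r - 1) :=
        mod_cast coeffMajorant_le Nat.one_le_two_pow r
    _ ≤ _ := by rw [hmain]; gcongr
end

section
/- For every natural number r, the Dirichlet series f(s) = Σ_{n=1}^∞ 2^(r·ν(n)) n^(-s) factors for Re(s) > 1 as f(s) = ζ(s)^(2^r) · g(s), where g(s) = ∏_p (1 + (2^r − 1) p^(-s)) (1 − p^(-s))^(2^r − 1) and the Euler product/Dirichlet series of g converges absolutely for Re(s) > 1/2. -/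
open Complex

private lemma hasProd_zero_of_eq_zero {ι : Type*} {f : ι → ℂ} {i : ι} (hi : f i = 0) :
    HasProd f 0 := by
  have h : ∀ᶠ s : Finset ι in Filter.atTop, ∏ j ∈ s, f j = 0 := by
    filter_upwards [Filter.eventually_ge_atTop {i}] with s hs
    exact Finset.prod_eq_zero (hs (Finset.mem_singleton_self i)) hi
  exact Filter.Tendsto.congr' (h.mono fun s h => h.symm) tendsto_const_nhds

private lemma multipliable_of_summable {ι : Type*} {f : ι → ℂ}
    (h : Summable fun i => ‖f i - 1‖) : Multipliable f := by
  by_cases h0 : ∀ i, f i ≠ 0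
  · have hs : Summable fun i => Complex.log (f i) := by
      have := (h.of_norm.neg).clog_one_sub
      simpa using this
    exact Complex.multipliable_of_summable_log hs
  · push_neg at h0
    obtain ⟨i, hi⟩ := h0
    exact ⟨0, hasProd_zero_of_eq_zero hi⟩

private lemma hasProd_pow {ι : Type*} {f : ι → ℂ} {a : ℂ} (h : HasProd f a) (k : ℕ) :
    HasProd (fun i => f i ^ k) (a ^ k) := by
  induction k with
  | zero => simpa using hasProd_one
  | succ n ih => simpa [pow_succ] using ih.mul h

private lemma poly_bound (m : ℕ) : ∃ C : ℝ, 0 ≤ C ∧ ∀ x : ℂ, ‖x‖ ≤ 1 →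
    ‖(1 + (m : ℂ) * x) * (1 - x) ^ m - 1‖ ≤ C * ‖x‖ ^ 2 := by
  classical
  set P : Polynomial ℂ :=
    (1 + Polynomial.C (m : ℂ) * Polynomial.X) * (1 - Polynomial.X) ^ m - 1 with hP
  have hdvd : Polynomial.X ^ 2 ∣ P := by
    rw [Polynomial.X_pow_dvd_iff]
    intro d hd
    interval_cases d
    · rw [Polynomial.coeff_zero_eq_eval_zero]
      simp [hP]
    · have hd0 : (Polynomial.derivative ((1 - Polynomial.X : Polynomial ℂ) ^ m)).coeff 0
          = -(m : ℂ) := by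
        rw [Polynomial.derivative_pow, Polynomial.coeff_zero_eq_eval_zero]
        simp
      have hB : ((1 - Polynomial.X : Polynomial ℂ) ^ m).coeff 1 = -(m : ℂ) := by
        have h0 := Polynomial.coeff_derivative ((1 - Polynomial.X : Polynomial ℂ) ^ m) 0
        rw [hd0] at h0
        simpa using h0.symm
      have hB0 : ((1 - Polynomial.X : Polynomial ℂ) ^ m).coeff 0 = 1 := by
        rw [Polynomial.coeff_zero_eq_eval_zero]; simp
      rw [hP, Polynomial.coeff_sub, add_mul, one_mul, Polynomial.coeff_add, hB, mul_assoc,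
        Polynomial.coeff_C_mul, Polynomial.coeff_X_mul, hB0, Polynomial.coeff_one]
      simp
  obtain ⟨Q, hQ⟩ := hdvd
  obtain ⟨z, _, hz⟩ := (isCompact_closedBall (0 : ℂ) 1).exists_isMaxOn
    ⟨0, by simp⟩ ((Polynomial.continuous Q).norm.continuousOn)
  refine ⟨‖Q.eval z‖, norm_nonneg _, fun x hx => ?_⟩
  have hEval : (1 + (m : ℂ) * x) * (1 - x) ^ m - 1 = P.eval x := by
    simp [hP]
  rw [hEval, hQ]
  rw [Polynomial.eval_mul, Polynomial.eval_pow, Polynomial.eval_X, norm_mul, norm_pow]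
  rw [mul_comm]
  gcongr
  exact hz (by simpa [Metric.mem_closedBall, dist_zero_right] using hx)

private lemma natCast_pow_cpow {p : ℕ} (hp : 0 < p) (E : ℕ) (w : ℂ) :
    ((p ^ E : ℕ) : ℂ) ^ w = ((p : ℂ) ^ w) ^ E := by
  induction E with
  | zero => simp
  | succ n ih =>
    rw [pow_succ, Nat.cast_mul, pow_succ, ← ih]
    have h := mul_cpow_ofReal_nonneg (a := ((p ^ n : ℕ) : ℝ)) (b := ((p : ℕ) : ℝ))
      (by positivity) (by positivity) w
    push_cast at h ⊢
    exact h

private lemma card_primeFactors_bound (k : ℕ) (hk : 1 ≤ k) {ε : ℝ} (hε : 0 < ε) :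
    ∃ C : ℝ, 0 < C ∧ ∀ n : ℕ, 1 ≤ n →
      (k : ℝ) ^ n.primeFactors.card ≤ C * (n : ℝ) ^ ε := by
  classical
  set m := ⌈1 / ε⌉₊ with hm
  have hmε : 1 ≤ (m : ℝ) * ε := by
    have h1 : (1 / ε) ≤ (m : ℝ) := Nat.le_ceil _
    calc (1 : ℝ) = (1 / ε) * ε := by field_simp
    _ ≤ (m : ℝ) * ε := by gcongr
  set B := k ^ m with hB
  have hk1 : (1 : ℝ) ≤ (k : ℝ) := by exact_mod_cast hk
  refine ⟨(k : ℝ) ^ B, by positivity, fun n hn => ?_⟩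
  have hn0 : n ≠ 0 := by omega
  set S := n.primeFactors with hS
  have hsplit : (k : ℝ) ^ S.card = (∏ p ∈ S.filter (fun p => B ≤ p), (k : ℝ)) *
      (∏ p ∈ S.filter (fun p => ¬ B ≤ p), (k : ℝ)) := by
    rw [Finset.prod_filter_mul_prod_filter_not S (fun p => B ≤ p), Finset.prod_const]
  rw [hsplit]
  have h1 : (∏ p ∈ S.filter (fun p => ¬ B ≤ p), (k : ℝ)) ≤ (k : ℝ) ^ B := by
    rw [Finset.prod_const]
    apply pow_le_pow_right₀ hk1
    have hsub : S.filter (fun p => ¬ B ≤ p) ⊆ Finset.range B := by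
      intro p hp
      simp only [Finset.mem_filter, not_le] at hp
      exact Finset.mem_range.mpr hp.2
    simpa using Finset.card_le_card hsub
  have h2 : (∏ p ∈ S.filter (fun p => B ≤ p), (k : ℝ)) ≤ (n : ℝ) ^ ε := by
    have step1 : (∏ p ∈ S.filter (fun p => B ≤ p), (k : ℝ)) ≤
        ∏ p ∈ S.filter (fun p => B ≤ p), ((p : ℝ)) ^ ε := by
      apply Finset.prod_le_prod (fun _ _ => by positivity)
      intro p hp
      obtain ⟨hpS, hBp⟩ := Finset.mem_filter.mp hp
      calc (k : ℝ) = (k : ℝ) ^ (1 : ℝ) := (Real.rpow_one _).symm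
      _ ≤ (k : ℝ) ^ ((m : ℝ) * ε) := Real.rpow_le_rpow_of_exponent_le hk1 hmε
      _ = ((k : ℝ) ^ m) ^ ε := by
          rw [← Real.rpow_natCast (k : ℝ) m, ← Real.rpow_mul (by positivity)]
      _ ≤ (p : ℝ) ^ ε := by
          apply Real.rpow_le_rpow (by positivity) ?_ hε.le
          have : (B : ℝ) ≤ (p : ℝ) := by exact_mod_cast hBp
          simpa [hB] using this
    have step2 : (∏ p ∈ S.filter (fun p => B ≤ p), ((p : ℝ)) ^ ε) ≤ (n : ℝ) ^ ε := by
      rw [Real.finset_prod_rpow _ _ (fun p _ => by positivity)]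
      apply Real.rpow_le_rpow (Finset.prod_nonneg fun p _ => by positivity) ?_ hε.le
      have hdvd : (∏ p ∈ S.filter (fun p => B ≤ p), p) ∣ n := by
        exact dvd_trans (Finset.prod_dvd_prod_of_subset _ _ _ (Finset.filter_subset _ _))
          (Nat.prod_primeFactors_dvd n)
      have hle := Nat.le_of_dvd (Nat.pos_of_ne_zero hn0) hdvd
      have hle' : ((∏ p ∈ S.filter (fun p => B ≤ p), p : ℕ) : ℝ) ≤ (n : ℝ) := by
        exact_mod_cast hle
      simpa [Nat.cast_prod] using hle'
    exact step1.trans step2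
  have hnn : (0:ℝ) ≤ ∏ p ∈ S.filter (fun p => B ≤ p), (k : ℝ) :=
    Finset.prod_nonneg fun _ _ => by positivity
  calc (∏ p ∈ S.filter (fun p => B ≤ p), (k : ℝ)) *
      (∏ p ∈ S.filter (fun p => ¬ B ≤ p), (k : ℝ))
      ≤ (n : ℝ) ^ ε * (k : ℝ) ^ B := mul_le_mul h2 h1
        (Finset.prod_nonneg fun _ _ => by positivity) (by positivity)
  _ = (k : ℝ) ^ B * (n : ℝ) ^ ε := by ring

/-- The Dirichlet series `∑ 2^(r·ν(n)) n^(-s)` factors for `Re s > 1` as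
`ζ(s)^(2^r) · g(s)` where `g(s) = ∏_p (1 + (2^r-1)p^(-s))(1-p^(-s))^(2^r-1)`, and the Euler
product of `g` converges (absolutely) for `Re s > 1/2`. -/
theorem dirichlet_series_factorization (r : ℕ) :
    (∀ s : ℂ, 1 / 2 < s.re →
      (Multipliable fun p : Nat.Primes =>
        (1 + ((2 : ℂ) ^ r - 1) * (p : ℂ) ^ (-s)) * (1 - (p : ℂ) ^ (-s)) ^ (2 ^ r - 1)) ∧
      Summable fun p : Nat.Primes =>
        ‖(1 + ((2 : ℂ) ^ r - 1) * (p : ℂ) ^ (-s)) * (1 - (p : ℂ) ^ (-s)) ^ (2 ^ r - 1) - 1‖) ∧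
    (∀ s : ℂ, 1 < s.re →
      ∑' n : ℕ, (if n = 0 then 0 else
          (2 : ℂ) ^ (r * n.primeFactors.card) / (n : ℂ) ^ s) =
        (riemannZeta s) ^ (2 ^ r) *
          ∏' p : Nat.Primes,
            (1 + ((2 : ℂ) ^ r - 1) * (p : ℂ) ^ (-s)) * (1 - (p : ℂ) ^ (-s)) ^ (2 ^ r - 1)) := by
  have hk1 : (1 : ℕ) ≤ 2 ^ r := Nat.one_le_two_pow
  have hcoef : ((2 : ℂ) ^ r - 1) = ((2 ^ r - 1 : ℕ) : ℂ) := by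
    push_cast [Nat.cast_sub hk1]
    ring
  -- Part 1
  have main1 : ∀ s : ℂ, 1 / 2 < s.re →
      Summable fun p : Nat.Primes =>
        ‖(1 + ((2 : ℂ) ^ r - 1) * (p : ℂ) ^ (-s)) * (1 - (p : ℂ) ^ (-s)) ^ (2 ^ r - 1) - 1‖ := by
    intro s hs
    obtain ⟨C, hC0, hC⟩ := poly_bound (2 ^ r - 1)
    apply Summable.of_nonneg_of_le (fun _ => norm_nonneg _) ?_
      ((Nat.Primes.summable_rpow.mpr (by linarith : (-2 : ℝ) * s.re < -1)).mul_left C)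
    intro p
    have hp1 : (1 : ℝ) < (p : ℕ) := by exact_mod_cast p.prop.one_lt
    have hxnorm : ‖(p : ℂ) ^ (-s)‖ = ((p : ℕ) : ℝ) ^ (-s.re) := by
      rw [Complex.norm_natCast_cpow_of_pos p.prop.pos]
      simp
    have hx1 : ‖(p : ℂ) ^ (-s)‖ ≤ 1 := by
      rw [hxnorm]
      exact Real.rpow_le_one_of_one_le_of_nonpos (by exact_mod_cast p.prop.one_lt.le)
        (by linarith)
    calc ‖(1 + ((2 : ℂ) ^ r - 1) * (p : ℂ) ^ (-s)) * (1 - (p : ℂ) ^ (-s)) ^ (2 ^ r - 1) - 1‖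
        ≤ C * ‖(p : ℂ) ^ (-s)‖ ^ 2 := by
          rw [hcoef]
          exact hC _ hx1
      _ = C * ((p : ℕ) : ℝ) ^ ((-2 : ℝ) * s.re) := by
          rw [hxnorm, ← Real.rpow_natCast (((p : ℕ) : ℝ) ^ (-s.re)) 2,
            ← Real.rpow_mul (by positivity)]
          ring_nf
  refine ⟨fun s hs => ⟨multipliable_of_summable (main1 s hs), main1 s hs⟩, ?_⟩
  -- Part 2
  intro s hs
  set F : ℕ → ℂ := fun n => if n = 0 then 0 else
      (2 : ℂ) ^ (r * n.primeFactors.card) / (n : ℂ) ^ s with hF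
  have hF1 : F 1 = 1 := by simp [hF]
  have hF0 : F 0 = 0 := by simp [hF]
  have hFmul : ∀ {a b : ℕ}, Nat.Coprime a b → F (a * b) = F a * F b := by
    intro a b hab
    rcases eq_or_ne a 0 with rfl | ha
    · have hb : b = 1 := by simpa using hab
      simp [hF, hb]
    rcases eq_or_ne b 0 with rfl | hb
    · have ha1 : a = 1 := by simpa using hab
      simp [hF, ha1]
    · simp only [hF, if_neg (mul_ne_zero ha hb), if_neg ha, if_neg hb]
      rw [Nat.Coprime.primeFactors_mul hab,
        Finset.card_union_of_disjoint (Nat.Coprime.disjoint_primeFactors hab),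
        Nat.mul_add, pow_add, Nat.cast_mul]
      have hcp : ((a : ℂ) * (b : ℂ)) ^ s = (a : ℂ) ^ s * (b : ℂ) ^ s := by
        have h := mul_cpow_ofReal_nonneg (a := ((a : ℕ) : ℝ)) (b := ((b : ℕ) : ℝ))
          (by positivity) (by positivity) s
        push_cast at h ⊢
        exact h
      rw [hcp, div_mul_div_comm]
  have hεpos : (0 : ℝ) < (s.re - 1) / 2 := by linarith
  have hsumF : Summable fun n => ‖F n‖ := by
    obtain ⟨C, hC0, hbound⟩ := card_primeFactors_bound (2 ^ r) hk1 hεpos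
    apply Summable.of_nonneg_of_le (fun _ => norm_nonneg _) ?_
      ((Real.summable_nat_rpow.mpr
        (by linarith : (s.re - 1) / 2 - s.re < -1)).mul_left C)
    intro n
    rcases eq_or_ne n 0 with rfl | hn
    · rw [hF0]
      simp [Real.zero_rpow (by linarith : (s.re - 1) / 2 - s.re ≠ 0)]
    · have hn1 : 1 ≤ n := Nat.one_le_iff_ne_zero.mpr hn
      have hnR : (0 : ℝ) < (n : ℝ) := by exact_mod_cast hn1
      have hnorm2 : ‖(2 : ℂ) ^ (r * n.primeFactors.card)‖ =
          ((2 : ℝ) ^ r) ^ n.primeFactors.card := by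
        rw [norm_pow, pow_mul]
        norm_num
      calc ‖F n‖ = ((2 : ℝ) ^ r) ^ n.primeFactors.card / (n : ℝ) ^ s.re := by
            rw [hF]
            simp only [if_neg hn]
            rw [norm_div, hnorm2, Complex.norm_natCast_cpow_of_pos (Nat.pos_of_ne_zero hn)]
        _ ≤ (C * (n : ℝ) ^ ((s.re - 1) / 2)) / (n : ℝ) ^ s.re := by
            gcongr
            have := hbound n hn1
            push_cast at this
            exact this
        _ = C * (n : ℝ) ^ ((s.re - 1) / 2 - s.re) := by
            rw [Real.rpow_sub hnR, mul_div_assoc]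
  -- Euler product
  have hE := EulerProduct.eulerProduct_hasProd hF1 hFmul hsumF hF0
  have hloc : (fun p : Nat.Primes => ∑' e : ℕ, F ((p : ℕ) ^ e)) = fun p : Nat.Primes =>
      ((1 - (p : ℂ) ^ (-s))⁻¹) ^ (2 ^ r) *
        ((1 + ((2 : ℂ) ^ r - 1) * (p : ℂ) ^ (-s)) * (1 - (p : ℂ) ^ (-s)) ^ (2 ^ r - 1)) := by
    funext p
    set x : ℂ := (p : ℂ) ^ (-s) with hxdef
    have hxlt : ‖x‖ < 1 := by
      rw [hxdef, Complex.norm_natCast_cpow_of_pos p.prop.pos]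
      apply Real.rpow_lt_one_of_one_lt_of_neg (by exact_mod_cast p.prop.one_lt)
      simp only [neg_re]
      linarith
    have hx1 : (1 : ℂ) - x ≠ 0 := by
      rw [sub_ne_zero]
      intro h
      rw [← h] at hxlt
      simp at hxlt
    have hfe : (fun e : ℕ => F ((p : ℕ) ^ e)) =
        fun e => (2 : ℂ) ^ r * x ^ e + (if e = 0 then 1 - (2 : ℂ) ^ r else 0) := by
      funext e
      rcases e with _ | n
      · simp [hF]
      · have hne : ((p : ℕ) ^ (n + 1)) ≠ 0 := pow_ne_zero _ p.prop.pos.ne'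
        simp only [hF, if_neg hne,
          Nat.primeFactors_prime_pow n.succ_ne_zero p.prop,
          Finset.card_singleton, mul_one, Nat.succ_ne_zero, if_false, add_zero]
        rw [div_eq_mul_inv, ← Complex.cpow_neg, natCast_pow_cpow p.prop.pos]
    rw [hfe]
    have hgeo : Summable fun e : ℕ => (2 : ℂ) ^ r * x ^ e :=
      (summable_geometric_of_norm_lt_one hxlt).mul_left _
    have hone : Summable fun e : ℕ => (if e = 0 then 1 - (2 : ℂ) ^ r else 0) :=
      (hasSum_ite_eq 0 (1 - (2 : ℂ) ^ r)).summable
    rw [Summable.tsum_add hgeo hone, tsum_mul_left, tsum_geometric_of_norm_lt_one hxlt, tsum_ite_eq]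
    -- algebraic identity
    have hkm : 2 ^ r = (2 ^ r - 1) + 1 := by omega
    have hpowm : ((1 - x)⁻¹) ^ (2 ^ r) * (1 - x) ^ (2 ^ r - 1) = (1 - x)⁻¹ := by
      rw [hkm, pow_succ, inv_pow]
      field_simp
      simp
    rw [hcoef]
    have hxm : ((1 - x) : ℂ) ^ (2 ^ r - 1) ≠ 0 := pow_ne_zero _ hx1
    rw [mul_comm (1 + ((2 ^ r - 1 : ℕ) : ℂ) * x) ((1 - x) ^ (2 ^ r - 1)), ← mul_assoc, hpowm]
    have h2r : ((2 : ℂ) ^ r) = ((2 ^ r - 1 : ℕ) : ℂ) + 1 := by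
      rw [← hcoef]; ring
    rw [h2r]
    field_simp
    ring
  rw [hloc] at hE
  have hζk := hasProd_pow (riemannZeta_eulerProduct_hasProd hs) (2 ^ r)
  have hg : Multipliable fun p : Nat.Primes =>
      (1 + ((2 : ℂ) ^ r - 1) * (p : ℂ) ^ (-s)) * (1 - (p : ℂ) ^ (-s)) ^ (2 ^ r - 1) :=
    multipliable_of_summable (main1 s (by linarith))
  exact hE.unique (hζk.mul hg.hasProd)
end
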